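/- Let ι be a finite type, S a nonempty subset of ℤ≥0^ι, and N(S) the associated Newton polyhedron. Every nonempty compact exposed face F of N(S) is of the form F = F_ρ = {x ∈ N(S) : ρ(x) = min{ρ(σ) : σ ∈ S}} for some vector of weights ρ on ℝ^ι. Hence the nonempty compact exposed faces of N(S) are precisely the sets F_ρ with ρ a vector of weights. -/

import Mathlib

open Pointwise

/-- A vector of weights on `ℝ^ι`: a linear map `ρ : (ι → ℝ) → ℝ` with `ρ(σ) > 0`
for every nonzero `σ` with all coordinates nonnegative. -/
def IsWeightVector {ι : Type*} (ρ : (ι → ℝ) →ₗ[ℝ] ℝ) : Prop :=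
  ∀ σ : ι → ℝ, (∀ i, 0 ≤ σ i) → σ ≠ 0 → 0 < ρ σ

/-- The Newton polyhedron of a set `S ⊆ ℤ≥0^ι`: the Minkowski sum of the convex
hull of `S` (viewed inside `ℝ^ι`) with the nonnegative orthant. -/
def newtonPolyhedron {ι : Type*} (S : Set (ι → ℕ)) : Set (ι → ℝ) :=
  convexHull ℝ ((fun σ : ι → ℕ => fun i => (σ i : ℝ)) '' S) + {x : ι → ℝ | ∀ i, 0 ≤ x i}

/-! If `F` is a nonempty bounded face exposed by `l`, then `l` is strictly negative on every
nonzero vector `u ≥ 0`: such `u` are recession directions of `N(S)`, and `l u = 0` would put a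
whole ray inside `F`. So `ρ = -l` is a vector of weights. Conversely, a vector of weights has
finite sublevel sets on `ℤ≥0^ι`, so it attains a minimum `ν` on `S`; then `-ρ` exposes `F_ρ`,
and `F_ρ` is the convex hull of the finitely many points of `S` where `ρ = ν`, hence compact. -/

section ConvexGeometry

variable {E : Type*}

theorem convexHull_inter_hyperplane_subset [AddCommGroup E] [Module ℝ E] {f : E →ₗ[ℝ] ℝ}
    {s : Set E} {ν : ℝ} (hs : ∀ x ∈ s, ν ≤ f x) :
    convexHull ℝ s ∩ {x | f x = ν} ⊆ convexHull ℝ (s ∩ {x | f x = ν}) := by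
  rintro x ⟨hx, hfx⟩
  set s₀ := s ∩ {x | f x = ν}
  set s₁ := s ∩ {x | ν < f x}
  have hs_eq : s = s₀ ∪ s₁ := by
    ext y
    constructor
    · intro hy
      rcases (hs y hy).eq_or_lt with h | h
      exacts [Or.inl ⟨hy, h.symm⟩, Or.inr ⟨hy, h⟩]
    · rintro (hy | hy) <;> exact hy.1
  have hs₁ : convexHull ℝ s₁ ⊆ {x | ν < f x} :=
    convexHull_min Set.inter_subset_right (convex_halfSpace_gt f.isLinear ν)
  rcases s₁.eq_empty_or_nonempty with h₁ | h₁
  · rwa [hs_eq, h₁, Set.union_empty] at hx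
  rcases s₀.eq_empty_or_nonempty with h₀ | h₀
  · rw [hs_eq, h₀, Set.empty_union] at hx
    exact absurd hfx (hs₁ hx).ne'
  rw [hs_eq, convexHull_union h₀ h₁, mem_convexJoin] at hx
  obtain ⟨a, ha, b, hb, p, q, -, -, hpq, rfl⟩ := hx
  have hfa : f a = ν :=
    convexHull_min Set.inter_subset_right (convex_hyperplane f.isLinear ν) ha
  have hq0 : q = 0 := by
    have hfb : ν < f b := hs₁ hb
    have hfx' : p * ν + q * f b = ν := by simpa [hfa] using hfx
    have : q * (f b - ν) = 0 := by linear_combination hfx' - ν * hpq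
    exact (mul_eq_zero.mp this).resolve_right (sub_pos.mpr hfb).ne'
  obtain rfl : p = 1 := by linarith
  simpa [hq0] using ha

theorem ContinuousLinearMap.toExposed_neg_eq_of_isLeast [AddCommGroup E] [Module ℝ E]
    [TopologicalSpace E] (ρ : E →L[ℝ] ℝ) {A : Set E} {ν : ℝ} (h : IsLeast (ρ '' A) ν) :
    (-ρ).toExposed A = {x ∈ A | ρ x = ν} := by
  obtain ⟨⟨x₀, hx₀, rfl⟩, hle⟩ := h
  ext x
  simp only [ContinuousLinearMap.toExposed, neg_apply, neg_le_neg_iff,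
    Set.mem_ofPred_eq, and_congr_right_iff]
  exact fun hx => ⟨fun hmin => le_antisymm (hmin x₀ hx₀) (hle ⟨x, hx, rfl⟩),
    fun h y hy => h ▸ hle ⟨y, hy, rfl⟩⟩

theorem ContinuousLinearMap.apply_neg_of_isBounded_toExposed [NormedAddCommGroup E]
    [NormedSpace ℝ E] (l : E →L[ℝ] ℝ) {A : Set E} {u : E} (hu : u ≠ 0)
    (hA : ∀ x ∈ A, ∀ t : ℝ, 0 ≤ t → x + t • u ∈ A)
    (hne : (l.toExposed A).Nonempty) (hb : Bornology.IsBounded (l.toExposed A)) : l u < 0 := by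
  obtain ⟨x, hxA, hxmax⟩ := hne
  have hle : l u ≤ 0 := by simpa using hxmax _ (hA x hxA 1 zero_le_one)
  refine hle.lt_of_ne fun h0 => ?_
  -- Otherwise the whole ray `x + t • u`, `t ≥ 0`, lies in the face.
  have hray : ∀ t : ℝ, 0 ≤ t → x + t • u ∈ l.toExposed A := fun t ht =>
    ⟨hA x hxA t ht, fun y hy => by simpa [h0] using hxmax y hy⟩
  obtain ⟨C, hC⟩ := hb.exists_norm_le
  have hu' : 0 < ‖u‖ := norm_pos_iff.mpr hu
  set t := (C + ‖x‖ + 1) / ‖u‖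
  have ht : 0 ≤ t := div_nonneg (by linarith [hC x ⟨hxA, hxmax⟩, norm_nonneg x]) hu'.le
  have : ‖t • u‖ ≤ C + ‖x‖ := calc
    ‖t • u‖ = ‖(x + t • u) - x‖ := by rw [add_sub_cancel_left]
    _ ≤ ‖x + t • u‖ + ‖x‖ := norm_sub_le _ _
    _ ≤ C + ‖x‖ := by gcongr; exact hC _ (hray t ht)
  rw [norm_smul, Real.norm_of_nonneg ht, div_mul_cancel₀ _ hu'.ne'] at this
  linarith

end ConvexGeometry

section NewtonPolyhedron

variable {ι : Type*} {S : Set (ι → ℕ)}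

theorem convex_newtonPolyhedron (S : Set (ι → ℕ)) : Convex ℝ (newtonPolyhedron S) :=
  (convex_convexHull ℝ _).add (convex_Ici 0)

theorem add_mem_newtonPolyhedron {x u : ι → ℝ} (hx : x ∈ newtonPolyhedron S) (hu : 0 ≤ u) :
    x + u ∈ newtonPolyhedron S := by
  obtain ⟨c, hc, v, hv, rfl⟩ := hx
  exact ⟨c, hc, v + u, add_nonneg hv hu, (add_assoc _ _ _).symm⟩

theorem natCast_mem_newtonPolyhedron {σ : ι → ℕ} (hσ : σ ∈ S) :
    (fun i => (σ i : ℝ)) ∈ newtonPolyhedron S :=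
  ⟨_, subset_convexHull ℝ _ ⟨σ, hσ, rfl⟩, 0, fun _ => le_rfl, add_zero _⟩

end NewtonPolyhedron

namespace IsWeightVector

variable {ι : Type*} {ρ : (ι → ℝ) →ₗ[ℝ] ℝ} {S : Set (ι → ℕ)} {ν : ℝ}

theorem nonneg (hρ : IsWeightVector ρ) {u : ι → ℝ} (hu : 0 ≤ u) : 0 ≤ ρ u := by
  rcases eq_or_ne u 0 with rfl | h
  · rw [map_zero]
  · exact (hρ u hu h).le

theorem mul_apply_single_le [DecidableEq ι] (hρ : IsWeightVector ρ) {u : ι → ℝ} (hu : 0 ≤ u)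
    (i : ι) : u i * ρ (Pi.single i 1) ≤ ρ u := by
  have hrest : 0 ≤ u - u i • Pi.single i 1 := fun j => by
    rcases eq_or_ne j i with rfl | hj
    · simp
    · simpa [hj] using hu j
  have := hρ.nonneg hrest
  rw [map_sub, map_smul, smul_eq_mul] at this
  linarith

theorem finite_setOf_le [Fintype ι] (hρ : IsWeightVector ρ) (B : ℝ) :
    {σ : ι → ℕ | ρ (fun i => (σ i : ℝ)) ≤ B}.Finite := by
  classical
  refine (Set.finite_Iic fun i => ⌊B / ρ (Pi.single i 1)⌋₊).subset fun σ hσ i => ?_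
  have hpos : 0 < ρ (Pi.single i 1) :=
    hρ _ (Pi.single_nonneg.mpr zero_le_one : (0 : ι → ℝ) ≤ Pi.single i 1) (by simp)
  exact Nat.le_floor <| (le_div_iff₀ hpos).mpr <|
    (hρ.mul_apply_single_le (fun j => Nat.cast_nonneg (σ j)) i).trans hσ

theorem exists_isLeast [Fintype ι] (hρ : IsWeightVector ρ) (hS : S.Nonempty) :
    ∃ ν, IsLeast ((fun σ : ι → ℕ => ρ (fun i => (σ i : ℝ))) '' S) ν := by
  obtain ⟨σ₀, hσ₀⟩ := hS
  obtain ⟨σ, ⟨hσ, -⟩, hmin⟩ :=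
    Set.exists_min_image {σ ∈ S | ρ (fun i => (σ i : ℝ)) ≤ ρ (fun i => (σ₀ i : ℝ))}
      (fun σ : ι → ℕ => ρ (fun i => (σ i : ℝ)))
      ((hρ.finite_setOf_le _).subset fun _ h => h.2) ⟨σ₀, hσ₀, le_rfl⟩
  refine ⟨_, ⟨σ, hσ, rfl⟩, ?_⟩
  rintro _ ⟨τ, hτ, rfl⟩
  rcases le_total (ρ fun i => (τ i : ℝ)) (ρ fun i => (σ₀ i : ℝ)) with h | h
  · exact hmin τ ⟨hτ, h⟩
  · exact (hmin σ₀ ⟨hσ₀, le_rfl⟩).trans h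

theorem le_of_mem_newtonPolyhedron (hρ : IsWeightVector ρ)
    (hν : ∀ σ ∈ S, ν ≤ ρ (fun i => (σ i : ℝ))) {x : ι → ℝ} (hx : x ∈ newtonPolyhedron S) :
    ν ≤ ρ x := by
  obtain ⟨c, hc, u, hu, rfl⟩ := hx
  have hνc : ν ≤ ρ c := convexHull_min (by rintro _ ⟨σ, hσ, rfl⟩; exact hν σ hσ)
    (convex_halfSpace_ge ρ.isLinear ν) hc
  rw [map_add]
  linarith [hρ.nonneg hu]

theorem isLeast_image_newtonPolyhedron (hρ : IsWeightVector ρ)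
    (hν : IsLeast ((fun σ : ι → ℕ => ρ (fun i => (σ i : ℝ))) '' S) ν) :
    IsLeast (ρ '' newtonPolyhedron S) ν := by
  obtain ⟨⟨σ, hσ, rfl⟩, hle⟩ := hν
  refine ⟨⟨_, natCast_mem_newtonPolyhedron hσ, rfl⟩, ?_⟩
  rintro _ ⟨x, hx, rfl⟩
  exact hρ.le_of_mem_newtonPolyhedron (fun τ hτ => hle ⟨τ, hτ, rfl⟩) hx

theorem newtonPolyhedron_inter_eq_convexHull (hρ : IsWeightVector ρ)
    (hν : ∀ σ ∈ S, ν ≤ ρ (fun i => (σ i : ℝ))) :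
    {x ∈ newtonPolyhedron S | ρ x = ν} =
      convexHull ℝ ((fun σ : ι → ℕ => fun i => (σ i : ℝ)) ''
        {σ ∈ S | ρ (fun i => (σ i : ℝ)) = ν}) := by
  refine subset_antisymm ?_ (convexHull_min ?_
    ((convex_newtonPolyhedron S).inter (convex_hyperplane ρ.isLinear ν)))
  · rintro _ ⟨⟨c, hc, u, hu, rfl⟩, hcu⟩
    have hνc : ν ≤ ρ c := hρ.le_of_mem_newtonPolyhedron hν ⟨c, hc, 0, fun _ => le_rfl, add_zero c⟩
    rw [map_add] at hcu
    obtain rfl : u = 0 := by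
      by_contra hu0
      linarith [hρ u hu hu0]
    rw [map_zero, add_zero] at hcu
    simp only [add_zero]
    refine convexHull_mono ?_
      (convexHull_inter_hyperplane_subset (f := ρ) (by rintro _ ⟨σ, hσ, rfl⟩; exact hν σ hσ)
        ⟨hc, hcu⟩)
    rintro _ ⟨⟨σ, hσ, rfl⟩, hσν⟩
    exact ⟨σ, ⟨hσ, hσν⟩, rfl⟩
  · rintro _ ⟨σ, ⟨hσ, hσν⟩, rfl⟩
    exact ⟨natCast_mem_newtonPolyhedron hσ, hσν⟩

end IsWeightVector

/-- The nonempty compact exposed faces of the Newton polyhedron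
`N(S)` are precisely the sets `F_ρ = {x ∈ N(S) : ρ(x) = min ρ(S)}`, for `ρ` a
vector of weights on `ℝ^ι`. -/
theorem compact_exposed_faces_are_weight_faces {ι : Type*} [Fintype ι]
    (S : Set (ι → ℕ)) (hS : S.Nonempty) (F : Set (ι → ℝ)) :
    (F.Nonempty ∧ IsCompact F ∧ IsExposed ℝ (newtonPolyhedron S) F) ↔
      ∃ ρ : (ι → ℝ) →ₗ[ℝ] ℝ, IsWeightVector ρ ∧
        ∃ ν : ℝ, IsLeast ((fun σ : ι → ℕ => ρ (fun i => (σ i : ℝ))) '' S) ν ∧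
          F = {x ∈ newtonPolyhedron S | ρ x = ν} := by
  constructor
  · rintro ⟨hne, hcomp, hexp⟩
    obtain ⟨l, rfl⟩ := hexp hne
    have hρ : IsWeightVector (-l : (ι → ℝ) →L[ℝ] ℝ).toLinearMap := fun σ hσ hσ0 =>
      neg_pos.mpr <| l.apply_neg_of_isBounded_toExposed hσ0
        (fun x hx t ht => add_mem_newtonPolyhedron hx (smul_nonneg ht hσ)) hne hcomp.isBounded
    obtain ⟨ν, hν⟩ := hρ.exists_isLeast hS
    refine ⟨_, hρ, ν, hν, ?_⟩
    conv_lhs => rw [← neg_neg l]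
    exact (-l).toExposed_neg_eq_of_isLeast (hρ.isLeast_image_newtonPolyhedron hν)
  · rintro ⟨ρ, hρ, ν, hν, rfl⟩
    have hface := hρ.isLeast_image_newtonPolyhedron hν
    refine ⟨hface.1, ?_, fun _ => ⟨-LinearMap.toContinuousLinearMap ρ,
      (LinearMap.toContinuousLinearMap ρ).toExposed_neg_eq_of_isLeast hface |>.symm⟩⟩
    rw [hρ.newtonPolyhedron_inter_eq_convexHull fun σ hσ => hν.2 ⟨σ, hσ, rfl⟩]
    exact (((hρ.finite_setOf_le ν).subset fun _ hσ => hσ.2.le).image _).isCompact_convexHull ℝ
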